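/- arXiv:2402.16560 — 10 statements merged into one kernel-verified Lean document; each statement's English description precedes it below -/
import Mathlib

section
/- Let G be a finite type, let I : G → M → Prop be a formal context with closure operator γ = Φ ∘ Ψ, and let D : G → ℝ. Then D is contourclosed (for every α in the range of D, the contour set {g : G | α ≤ D g} satisfies γ({g | α ≤ D g}) = {g | α ≤ D g}) if and only if D is quasiconcave (for every nonempty A ⊆ G and every g ∈ γ(A) \ A one has sInf (D '' A) ≤ D g). -/
open MeasureTheory

variable {G M : Type*}

/-- Attribute derivation operator of a formal context. -/
def Psi (I : G → M → Prop) (A : Set G) : Set M := {m | ∀ g ∈ A, I g m}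

/-- Object derivation operator of a formal context. -/
def Phi (I : G → M → Prop) (B : Set M) : Set G := {g | ∀ m ∈ B, I g m}

/-- Closure operator `γ = Φ ∘ Ψ` of a formal context. -/
def gam (I : G → M → Prop) (A : Set G) : Set G := Phi I (Psi I A)

/-- On a finite object set, a depth function is contourclosed iff it is quasiconcave. -/
theorem contourclosed_iff_quasiconcave [Finite G] (I : G → M → Prop) (D : G → ℝ) :
    (∀ α ∈ Set.range D, gam I {g | α ≤ D g} = {g | α ≤ D g}) ↔
      (∀ A : Set G, A.Nonempty → ∀ g ∈ gam I A \ A, sInf (D '' A) ≤ D g) := by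
  have hext : ∀ A : Set G, A ⊆ gam I A := fun A g hg m hm => hm g hg
  have hmono : ∀ A B : Set G, A ⊆ B → gam I A ⊆ gam I B :=
    fun A B hAB g hg m hm => hg m (fun x hx => hm x (hAB hx))
  constructor
  · intro hcc A hA g hg
    have hfin : (D '' A).Finite := (A.toFinite.image D)
    have hne : (D '' A).Nonempty := hA.image D
    obtain ⟨g₀, hg₀, hDg₀⟩ := hne.csInf_mem hfin
    have hrange : sInf (D '' A) ∈ Set.range D := ⟨g₀, hDg₀⟩
    have hsub : A ⊆ {x | sInf (D '' A) ≤ D x} := fun x hx =>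
      csInf_le hfin.bddBelow ⟨x, hx, rfl⟩
    have := hmono _ _ hsub hg.1
    rw [hcc _ hrange] at this
    exact this
  · intro hqc α ⟨g₀, hg₀⟩
    apply Set.Subset.antisymm _ (hext _)
    intro g hg
    by_cases hgC : g ∈ {x | α ≤ D x}
    · exact hgC
    · have hCne : ({x | α ≤ D x} : Set G).Nonempty := ⟨g₀, le_of_eq hg₀.symm⟩
      have h := hqc _ hCne g ⟨hg, hgC⟩
      have : α ≤ sInf (D '' {x | α ≤ D x}) :=
        le_csInf (hCne.image D) (by rintro _ ⟨x, hx, rfl⟩; exact hx)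
      exact this.trans h
end

section
/- Let I : G → M → Prop be a formal context with closure operator γ = Φ ∘ Ψ, and let D : G → ℝ be quasiconcave, i.e. for every nonempty A ⊆ G and every g ∈ γ(A) \ A one has sInf (D '' A) ≤ D g. If c : G has maximal depth (for every g : G, D g ≤ D c), then D is starshaped with center c: for every g : G and every g' ∈ γ({c, g}) one has D g ≤ D g'. -/
open MeasureTheory

variable {G M : Type*}

/-- If `D` is quasiconcave and `c` has maximal depth, then `D` is starshaped with
center `c`. -/
theorem quasiconcave_implies_starshaped (I : G → M → Prop) (D : G → ℝ)
    (hqc : ∀ A : Set G, A.Nonempty → ∀ g ∈ gam I A \ A, sInf (D '' A) ≤ D g)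
    (c : G) (hc : ∀ g : G, D g ≤ D c) :
    ∀ g : G, ∀ g' ∈ gam I {c, g}, D g ≤ D g' := by
  intro g g' hg'
  by_cases hmem : g' ∈ ({c, g} : Set G)
  · rcases hmem with h | h
    · subst h; exact hc g
    · subst h; exact le_refl _
  · have h := hqc {c, g} ⟨c, by simp⟩ g' ⟨hg', hmem⟩
    have himg : D '' ({c, g} : Set G) = {D c, D g} := by
      simp [Set.image_pair]
    rw [himg, csInf_pair] at h
    exact le_trans (le_inf (hc g) (le_refl _)) h
end

section
/- Let I : G → M → Prop be a formal context with closure operator γ = Φ ∘ Ψ, and let D : G → ℝ be quasiconcave, i.e. for every nonempty A ⊆ G and every g ∈ γ(A) \ A one has sInf (D '' A) ≤ D g. Then D is isotone: for all g₁ g₂ : G with γ({g₂}) ⊆ γ({g₁}) one has D g₁ ≤ D g₂. -/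
open MeasureTheory

variable {G M : Type*}

/-- If `D` is quasiconcave, then `D` is isotone. -/
theorem quasiconcave_implies_isotone (I : G → M → Prop) (D : G → ℝ)
    (hqc : ∀ A : Set G, A.Nonempty → ∀ g ∈ gam I A \ A, sInf (D '' A) ≤ D g) :
    ∀ g₁ g₂ : G, gam I {g₂} ⊆ gam I {g₁} → D g₁ ≤ D g₂ := by
  intro g₁ g₂ h
  by_cases he : g₂ = g₁
  · exact le_of_eq (by rw [he])
  · have hg2 : g₂ ∈ gam I ({g₂} : Set G) := fun m hm => hm g₂ rfl
    have := hqc {g₁} ⟨g₁, rfl⟩ g₂ ⟨h hg2, he⟩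
    simpa using this
end

section
/- Let I : G → M → Prop be a formal context with closure operator γ = Φ ∘ Ψ. Suppose there exist sets A B ⊆ G that are finite, nonempty and disjoint, with A ⊆ γ(B) and B ⊆ γ(A). Then there exists no function D : G → ℝ that is strictly quasiconcave, i.e. no D such that for every nonempty S ⊆ G and every g ∈ γ(S) \ S one has sInf (D '' S) < D g. -/
open MeasureTheory

variable {G M : Type*}

/-- If there are finite, nonempty, disjoint sets `A`, `B` with `A ⊆ γ(B)` and
`B ⊆ γ(A)`, then no strictly quasiconcave depth function exists. -/
theorem no_strictly_quasiconcave (I : G → M → Prop) (A B : Set G)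
    (hAfin : A.Finite) (hBfin : B.Finite) (hAne : A.Nonempty) (hBne : B.Nonempty)
    (hdisj : Disjoint A B) (hAB : A ⊆ gam I B) (hBA : B ⊆ gam I A) :
    ¬ ∃ D : G → ℝ, ∀ S : Set G, S.Nonempty → ∀ g ∈ gam I S \ S, sInf (D '' S) < D g := by
  rintro ⟨D, hD⟩
  obtain ⟨a, haA, ha⟩ := ((hAne.image D).csInf_mem (hAfin.image D)).imp (fun _ h => h)
  obtain ⟨b, hbB, hb⟩ := ((hBne.image D).csInf_mem (hBfin.image D)).imp (fun _ h => h)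
  have h1 : sInf (D '' B) < D a :=
    hD B hBne a ⟨hAB haA, fun hx => hdisj.le_bot ⟨haA, hx⟩⟩
  have h2 : sInf (D '' A) < D b :=
    hD A hAne b ⟨hBA hbB, fun hx => hdisj.le_bot ⟨hx, hbB⟩⟩
  rw [ha] at h1; rw [hb] at h2
  exact absurd (h1.trans h2) (lt_irrefl _)
end

section
/- Let I : G → M → Prop be a formal context with derivation operators Ψ and Φ and closure operator γ = Φ ∘ Ψ, let μ be a measure on G, and let g : G. Then the supremum (in ℝ≥0∞) over all attributes m : M with ¬ I g m of μ(Φ({m})) equals the supremum over all extents not containing g: ⨆ (m : M) (_ : ¬ I g m), μ (Φ {m}) = ⨆ (E : Set G) (_ : γ E = E) (_ : g ∉ E), μ E. -/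
open MeasureTheory

variable {G M : Type*}

lemma phi_extent (I : G → M → Prop) (B : Set M) : gam I (Phi I B) = Phi I B := by
  ext x
  constructor
  · intro hx m hm
    exact hx m (fun y hy => hy m hm)
  · intro hx m hm
    exact hm x hx

/-- The supremum of measures of single-attribute extents over attributes not held by `g`
equals the supremum of measures of extents not containing `g`. -/
theorem sup_single_attribute_eq_sup_extents [MeasurableSpace G]
    (I : G → M → Prop) (μ : Measure G) (g : G) :
    (⨆ (m : M) (_ : ¬ I g m), μ (Phi I {m})) =
      ⨆ (E : Set G) (_ : gam I E = E) (_ : g ∉ E), μ E := by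
  apply le_antisymm
  · refine iSup₂_le fun m hm => ?_
    have hg : g ∉ Phi I {m} := fun h => hm (h m rfl)
    refine le_iSup_of_le (Phi I {m}) ?_
    rw [iSup_pos (phi_extent I {m}), iSup_pos hg]
  · refine iSup₂_le fun E hE => iSup_le fun hg => ?_
    have hg' : g ∉ gam I E := by rw [hE]; exact hg
    simp only [gam, Phi, Set.mem_setOf_eq] at hg'
    push_neg at hg'
    obtain ⟨m, hm, hIm⟩ := hg'
    have hsub : E ⊆ Phi I {m} := fun x hx m' hm' => by
      rcases hm' with rfl; exact hm x hx
    calc μ E ≤ μ (Phi I {m}) := measure_mono hsub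
      _ ≤ _ := le_iSup_of_le m (by rw [iSup_pos hIm])
end

section
/- Let I : G → M → Prop be a formal context with derivation operators Ψ and Φ and closure operator γ = Φ ∘ Ψ, and let μ be a probability measure on G. Define the generalised Tukey depth T : G → ℝ by T g = 1 - (⨆ (m : M) (_ : ¬ I g m), μ (Φ {m})).toReal. Then T is contourclosed: for every α in the range of T, the contour set {g : G | α ≤ T g} satisfies γ({g | α ≤ T g}) = {g | α ≤ T g}. -/
open MeasureTheory

variable {G M : Type*}

/-- The generalised Tukey depth with respect to a formal context and a measure. -/
noncomputable def genTukey [MeasurableSpace G] (I : G → M → Prop) (μ : Measure G) (g : G) : ℝ :=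
  1 - (⨆ (m : M) (_ : ¬ I g m), μ (Phi I {m})).toReal

lemma sup_le_one [MeasurableSpace G] (I : G → M → Prop) (μ : Measure G)
    [IsProbabilityMeasure μ] (g : G) :
    (⨆ (m : M) (_ : ¬ I g m), μ (Phi I {m})) ≤ 1 := by
  refine iSup₂_le fun m _ => ?_
  calc μ (Phi I {m}) ≤ μ Set.univ := measure_mono (Set.subset_univ _)
    _ = 1 := measure_univ

/-- The generalised Tukey depth is contourclosed. -/
theorem genTukey_contourclosed [MeasurableSpace G] (I : G → M → Prop) (μ : Measure G)
    [IsProbabilityMeasure μ] :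
    ∀ α ∈ Set.range (genTukey I μ),
      gam I {g | α ≤ genTukey I μ g} = {g | α ≤ genTukey I μ g} := by
  rintro α ⟨g₀, hg₀⟩
  apply Set.Subset.antisymm
  · intro g hg
    -- α ≤ 1 since genTukey ≤ 1
    have hα1 : α ≤ 1 := by
      rw [← hg₀]
      have : (0:ℝ) ≤ (⨆ (m : M) (_ : ¬ I g₀ m), μ (Phi I {m})).toReal :=
        ENNReal.toReal_nonneg
      simp only [genTukey]; linarith
    have key : (⨆ (m : M) (_ : ¬ I g m), μ (Phi I {m})) ≤ ENNReal.ofReal (1 - α) := by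
      refine iSup₂_le fun m hm => ?_
      -- g ∈ γ A, so m ∉ Ψ A, so ∃ a ∈ A with ¬ I a m
      have hmΨ : m ∉ Psi I {g | α ≤ genTukey I μ g} := fun h => hm (hg m h)
      simp only [Psi, Set.mem_setOf_eq, not_forall] at hmΨ
      obtain ⟨a, ha, ham⟩ := hmΨ
      have hsa : (⨆ (m : M) (_ : ¬ I a m), μ (Phi I {m})) ≤ 1 := sup_le_one I μ a
      have h1 : μ (Phi I {m}) ≤ (⨆ (m : M) (_ : ¬ I a m), μ (Phi I {m})) :=
        le_iSup₂ (f := fun m (_ : ¬ I a m) => μ (Phi I {m})) m ham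
      have hne : (⨆ (m : M) (_ : ¬ I a m), μ (Phi I {m})) ≠ ⊤ :=
        ne_top_of_le_ne_top ENNReal.one_ne_top hsa
      have hta : (⨆ (m : M) (_ : ¬ I a m), μ (Phi I {m})).toReal ≤ 1 - α := by
        have := ha; simp only [Set.mem_setOf_eq, genTukey] at this; linarith
      calc μ (Phi I {m}) = ENNReal.ofReal (μ (Phi I {m})).toReal := by
              rw [ENNReal.ofReal_toReal (ne_top_of_le_ne_top hne h1)]
        _ ≤ ENNReal.ofReal (1 - α) := by
              apply ENNReal.ofReal_le_ofReal
              calc (μ (Phi I {m})).toReal ≤ _ := ENNReal.toReal_mono hne h1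
                _ ≤ 1 - α := hta
    have : (⨆ (m : M) (_ : ¬ I g m), μ (Phi I {m})).toReal ≤ 1 - α := by
      have := ENNReal.toReal_mono ENNReal.ofReal_ne_top key
      rwa [ENNReal.toReal_ofReal (by linarith)] at this
    simp only [Set.mem_setOf_eq, genTukey]; linarith
  · intro g hg m hm
    exact hm g hg
end

section
/- Let I : G → M → Prop and Ĩ : G → M̃ → Prop be two formal contexts on the same object type G, with derivation operators Φ, Ψ and Φ̃, Ψ̃ and closure operators γ = Φ ∘ Ψ and γ̃ = Φ̃ ∘ Ψ̃. Let μ and ν be measures on G, and let e : G ≃ G be a bijection such that (i) for every E ⊆ G, γ E = E if and only if γ̃ (e '' E) = e '' E, and (ii) for every E ⊆ G with γ E = E, μ E = ν (e '' E). Then for every g : G, ⨆ (m : M) (_ : ¬ I g m), μ (Φ {m}) = ⨆ (m̃ : M̃) (_ : ¬ Ĩ (e g) m̃), ν (Φ̃ {m̃}) (suprema in ℝ≥0∞); in particular the generalised Tukey depths satisfy T_{I,μ}(g) = T_{Ĩ,ν}(e g). -/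
open MeasureTheory

variable {G M : Type*}

lemma sup_eq_extents (I : G → M → Prop) [MeasurableSpace G] (μ : Measure G) (g : G) :
    (⨆ (m : M) (_ : ¬ I g m), μ (Phi I {m})) =
    ⨆ (E : Set G) (_ : gam I E = E ∧ g ∉ E), μ E := by
  apply le_antisymm
  · refine iSup₂_le fun m hm => ?_
    refine le_iSup₂_of_le (Phi I {m}) ⟨phi_extent I _, fun hg => hm (hg m rfl)⟩ le_rfl
  · refine iSup₂_le fun E hE => ?_
    obtain ⟨hEe, hgE⟩ := hE
    have hg : g ∉ gam I E := by rw [hEe]; exact hgE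
    simp only [gam, Phi, Set.mem_setOf_eq, not_forall] at hg
    obtain ⟨m, hmE, hgm⟩ := hg
    refine le_iSup₂_of_le m hgm (measure_mono ?_)
    intro x hx m' hm'
    rw [Set.mem_singleton_iff] at hm'
    subst hm'
    exact hmE x hx

/-- Invariance of the generalised Tukey depth under extent- and probability-preserving
bijections. -/
theorem genTukey_invariance {M' : Type*} [MeasurableSpace G]
    (I : G → M → Prop) (J : G → M' → Prop) (μ ν : Measure G) (e : G ≃ G)
    (hext : ∀ E : Set G, gam I E = E ↔ gam J (e '' E) = e '' E)
    (hprob : ∀ E : Set G, gam I E = E → μ E = ν (e '' E)) (g : G) :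
    ((⨆ (m : M) (_ : ¬ I g m), μ (Phi I {m})) =
        ⨆ (m' : M') (_ : ¬ J (e g) m'), ν (Phi J {m'})) ∧
      genTukey I μ g = genTukey J ν (e g) := by
  have key : (⨆ (m : M) (_ : ¬ I g m), μ (Phi I {m})) =
      ⨆ (m' : M') (_ : ¬ J (e g) m'), ν (Phi J {m'}) := by
    rw [sup_eq_extents I μ g, sup_eq_extents J ν (e g)]
    apply le_antisymm
    · refine iSup₂_le fun E hE => ?_
      obtain ⟨hEe, hgE⟩ := hE
      refine le_iSup₂_of_le (e '' E) ⟨(hext E).mp hEe, ?_⟩ (hprob E hEe).le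
      rintro ⟨x, hx, hex⟩
      exact hgE (e.injective hex ▸ hx)
    · refine iSup₂_le fun F hF => ?_
      obtain ⟨hFe, hgF⟩ := hF
      have him : e '' (e.symm '' F) = F := by
        ext x; simp [Set.image_image]
      have hE : gam I (e.symm '' F) = e.symm '' F := by
        rw [hext, him]; exact hFe
      refine le_iSup₂_of_le (e.symm '' F) ⟨hE, ?_⟩ ?_
      · rintro ⟨x, hx, hex⟩
        have : e g = x := by rw [← hex, Equiv.apply_symm_apply]
        exact hgF (this ▸ hx)
      · rw [hprob _ hE, him]
  refine ⟨key, ?_⟩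
  unfold genTukey
  rw [key]
end

section
/- Let I : G → M → Prop be a formal context with derivation operator Φ, let μ and ν be probability measures on G, and let ε ≥ 0 be such that for every attribute m : M, |(μ (Φ {m})).toReal - (ν (Φ {m})).toReal| ≤ ε. Define the generalised Tukey depths T_μ g = 1 - (⨆ (m : M) (_ : ¬ I g m), μ (Φ {m})).toReal and T_ν g analogously. Then for every g : G, |T_μ g - T_ν g| ≤ ε. -/
open MeasureTheory

variable {G M : Type*}

lemma genTukey_aux [MeasurableSpace G] (I : G → M → Prop)
    (μ ν : Measure G) [IsProbabilityMeasure μ] [IsProbabilityMeasure ν]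
    (ε : ℝ) (hε : 0 ≤ ε)
    (h : ∀ m : M, (μ (Phi I {m})).toReal ≤ (ν (Phi I {m})).toReal + ε) (g : G) :
    (⨆ (m : M) (_ : ¬ I g m), μ (Phi I {m})).toReal
      ≤ (⨆ (m : M) (_ : ¬ I g m), ν (Phi I {m})).toReal + ε := by
  set T := ⨆ (m : M) (_ : ¬ I g m), ν (Phi I {m}) with hT
  have hT1 : T ≤ 1 := by
    apply iSup₂_le; intro m _; exact prob_le_one
  have hTne : T ≠ ⊤ := (hT1.trans_lt (by norm_num)).ne
  have hS : (⨆ (m : M) (_ : ¬ I g m), μ (Phi I {m})) ≤ T + ENNReal.ofReal ε := by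
    apply iSup₂_le; intro m hm
    have h1 : μ (Phi I {m}) ≤ ν (Phi I {m}) + ENNReal.ofReal ε := by
      have hμ : μ (Phi I {m}) = ENNReal.ofReal (μ (Phi I {m})).toReal :=
        (ENNReal.ofReal_toReal (measure_ne_top _ _)).symm
      rw [hμ]
      calc ENNReal.ofReal (μ (Phi I {m})).toReal
          ≤ ENNReal.ofReal ((ν (Phi I {m})).toReal + ε) := ENNReal.ofReal_le_ofReal (h m)
        _ = ENNReal.ofReal (ν (Phi I {m})).toReal + ENNReal.ofReal ε :=
            ENNReal.ofReal_add ENNReal.toReal_nonneg hε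
        _ = ν (Phi I {m}) + ENNReal.ofReal ε := by
            rw [ENNReal.ofReal_toReal (measure_ne_top _ _)]
    exact h1.trans (add_le_add_left (le_iSup₂ (f := fun m _ => ν (Phi I {m})) m hm) _)
  calc (⨆ (m : M) (_ : ¬ I g m), μ (Phi I {m})).toReal
      ≤ (T + ENNReal.ofReal ε).toReal :=
        ENNReal.toReal_mono (by finiteness) hS
    _ = T.toReal + ε := by
        rw [ENNReal.toReal_add hTne ENNReal.ofReal_ne_top, ENNReal.toReal_ofReal hε]

/-- The generalised Tukey depth is uniformly close for two probability measures whose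
values on all single-attribute extents are uniformly close. -/
theorem genTukey_uniform_close [MeasurableSpace G] (I : G → M → Prop)
    (μ ν : Measure G) [IsProbabilityMeasure μ] [IsProbabilityMeasure ν]
    (ε : ℝ) (hε : 0 ≤ ε)
    (h : ∀ m : M, |(μ (Phi I {m})).toReal - (ν (Phi I {m})).toReal| ≤ ε) :
    ∀ g : G, |genTukey I μ g - genTukey I ν g| ≤ ε := by
  intro g
  unfold genTukey
  rw [abs_le]
  have h1 := genTukey_aux I μ ν ε hε (fun m => by linarith [(abs_le.mp (h m)).2]) g
  have h2 := genTukey_aux I ν μ ε hε (fun m => by linarith [(abs_le.mp (h m)).1]) g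
  constructor <;> linarith
end

section
/- Consider the hierarchical nominal formal context with object type G = Fin 4 (objects o₀ = a₁a₂, o₁ = a₁b₂, o₂ = b₁a₂, o₃ = b₁b₂) and attribute type M = Fin 6 (attributes a₁, b₁, a₁a₂, a₁b₂, b₁a₂, b₁b₂), where the incidence relation is: o₀ has exactly {a₁, a₁a₂}, o₁ has exactly {a₁, a₁b₂}, o₂ has exactly {b₁, b₁a₂}, o₃ has exactly {b₁, b₁b₂}; let γ be the associated closure operator. Then there exists a parametrized depth function D : ProbVec G → G → ℝ that is strongly free with respect to quasiconcavity: (i) D p is quasiconcave for every probability vector p, and (ii) for every ε > 0 there exists a set 𝒫 of probability vectors on G with diameter at most ε such that for every parametrized depth function E : ProbVec G → G → ℝ with E p quasiconcave for every p, and for every probability vector p, there exist p̃ ∈ 𝒫 and a monotone function f : ℝ → ℝ with f ∘ (D p̃) = E p. -/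
open MeasureTheory

variable {G M : Type*}

/-- The hierarchical nominal formal context with objects `o₀ = a₁a₂`, `o₁ = a₁b₂`,
`o₂ = b₁a₂`, `o₃ = b₁b₂` and attributes `a₁, b₁, a₁a₂, a₁b₂, b₁a₂, b₁b₂`. -/
def hierI : Fin 4 → Fin 6 → Prop := fun g m =>
  (g = 0 ∧ (m = 0 ∨ m = 2)) ∨
  (g = 1 ∧ (m = 0 ∨ m = 3)) ∨
  (g = 2 ∧ (m = 1 ∨ m = 4)) ∨
  (g = 3 ∧ (m = 1 ∨ m = 5))

/-- Probability vectors on a finite type. -/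
def ProbVec (n : ℕ) : Type := {p : Fin n → ℝ // (∀ g, 0 ≤ p g) ∧ ∑ g, p g = 1}

/-- The mass a weight vector assigns to a set. -/
noncomputable def pMass {n : ℕ} (p : Fin n → ℝ) (A : Set (Fin n)) : ℝ :=
  ∑ g : Fin n, Set.indicator A p g

/-- Quasiconcavity with respect to the hierarchical nominal context. -/
def QuasiconcaveH (D : Fin 4 → ℝ) : Prop :=
  ∀ A : Set (Fin 4), A.Nonempty → ∀ g ∈ gam hierI A \ A, sInf (D '' A) ≤ D g

instance : ∀ g m, Decidable (hierI g m) := fun g m => by unfold hierI; infer_instance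

/-- Elements of the closure satisfy every common attribute of the set. -/
theorem hierI_of_mem_gam {A : Set (Fin 4)} {m : Fin 6} (hm : ∀ g ∈ A, hierI g m)
    {g : Fin 4} (hg : g ∈ gam hierI A) : hierI g m := hg m hm

theorem mem_gam_pair {x y : Fin 4} (hxy : ∀ m : Fin 6, ¬(hierI x m ∧ hierI y m))
    (g : Fin 4) : g ∈ gam hierI {x, y} := by
  intro m hm
  exact absurd ⟨hm x (by simp), hm y (by simp)⟩ (hxy m)

theorem quasi_pair {E : Fin 4 → ℝ} (hE : QuasiconcaveH E) (x y g : Fin 4)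
    (hxy : ∀ m : Fin 6, ¬(hierI x m ∧ hierI y m)) (hg1 : g ≠ x) (hg2 : g ≠ y) :
    min (E x) (E y) ≤ E g := by
  have h := hE {x, y} ⟨x, by simp⟩ g ⟨mem_gam_pair hxy g, by simp [hg1, hg2]⟩
  rw [Set.image_pair, csInf_pair] at h
  exact h

theorem keyLemma {a b c d : ℝ} (h1 : a ≤ b ∨ c ≤ b) (h2 : a ≤ d ∨ c ≤ d)
    (h4 : a ≤ c ∨ d ≤ c) (h5 : b ≤ a ∨ c ≤ a) (h6 : b ≤ d ∨ c ≤ d)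
    (h8 : b ≤ c ∨ d ≤ c) :
    (a = b ∧ a ≤ c ∧ a ≤ d) ∨ (c = d ∧ c ≤ a ∧ c ≤ b) := by
  have L : a ≤ b → b ≤ a → a ≤ c → a ≤ d →
      ((a = b ∧ a ≤ c ∧ a ≤ d) ∨ (c = d ∧ c ≤ a ∧ c ≤ b)) := fun p q r s =>
    Or.inl ⟨le_antisymm p q, r, s⟩
  have R : c ≤ d → d ≤ c → c ≤ a → c ≤ b →
      ((a = b ∧ a ≤ c ∧ a ≤ d) ∨ (c = d ∧ c ≤ a ∧ c ≤ b)) := fun p q r s =>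
    Or.inr ⟨le_antisymm p q, r, s⟩
  rcases le_total a b with hab | hab
  · rcases le_total c d with hcd | hcd
    · rcases h5 with h5 | h5
      · rcases h4 with h4 | h4
        · exact L (by linarith) (by linarith) (by linarith) (by linarith)
        · rcases le_total a c with hac | hac
          · exact L (by linarith) (by linarith) (by linarith) (by linarith)
          · exact R (by linarith) (by linarith) (by linarith) (by linarith)
      · rcases h8 with h8 | h8
        · exact L (by linarith) (by linarith) (by linarith) (by linarith)
        · exact R (by linarith) (by linarith) (by linarith) (by linarith)
    · rcases h5 with h5 | h5
      · rcases h2 with h2 | h2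
        · exact L (by linarith) (by linarith) (by linarith) (by linarith)
        · rcases le_total a c with hac | hac
          · exact L (by linarith) (by linarith) (by linarith) (by linarith)
          · exact R (by linarith) (by linarith) (by linarith) (by linarith)
      · rcases h6 with h6 | h6
        · exact L (by linarith) (by linarith) (by linarith) (by linarith)
        · exact R (by linarith) (by linarith) (by linarith) (by linarith)
  · rcases le_total c d with hcd | hcd
    · rcases h1 with h1 | h1
      · rcases h4 with h4 | h4
        · exact L (by linarith) (by linarith) (by linarith) (by linarith)
        · rcases le_total a c with hac | hac
          · exact L (by linarith) (by linarith) (by linarith) (by linarith)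
          · exact R (by linarith) (by linarith) (by linarith) (by linarith)
      · rcases h4 with h4 | h4
        · exact L (by linarith) (by linarith) (by linarith) (by linarith)
        · exact R (by linarith) (by linarith) (by linarith) (by linarith)
    · rcases h1 with h1 | h1
      · rcases h2 with h2 | h2
        · exact L (by linarith) (by linarith) (by linarith) (by linarith)
        · rcases le_total a c with hac | hac
          · exact L (by linarith) (by linarith) (by linarith) (by linarith)
          · exact R (by linarith) (by linarith) (by linarith) (by linarith)
      · rcases h2 with h2 | h2
        · exact L (by linarith) (by linarith) (by linarith) (by linarith)
        · exact R (by linarith) (by linarith) (by linarith) (by linarith)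

/-- Characterization of quasiconcave depths on the hierarchical nominal context. -/
theorem quasi_shape {E : Fin 4 → ℝ} (hE : QuasiconcaveH E) :
    (E 0 = E 1 ∧ E 0 ≤ E 2 ∧ E 0 ≤ E 3) ∨ (E 2 = E 3 ∧ E 2 ≤ E 0 ∧ E 2 ≤ E 1) := by
  have q02_1 := quasi_pair hE 0 2 1 (by decide) (by decide) (by decide)
  have q02_3 := quasi_pair hE 0 2 3 (by decide) (by decide) (by decide)
  have q03_1 := quasi_pair hE 0 3 1 (by decide) (by decide) (by decide)
  have q03_2 := quasi_pair hE 0 3 2 (by decide) (by decide) (by decide)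
  have q12_0 := quasi_pair hE 1 2 0 (by decide) (by decide) (by decide)
  have q12_3 := quasi_pair hE 1 2 3 (by decide) (by decide) (by decide)
  have q13_0 := quasi_pair hE 1 3 0 (by decide) (by decide) (by decide)
  have q13_2 := quasi_pair hE 1 3 2 (by decide) (by decide) (by decide)
  rw [min_le_iff] at q02_1 q02_3 q03_1 q03_2 q12_0 q12_3 q13_0 q13_2
  exact keyLemma q02_1 q02_3 q03_2 q12_0 q12_3 q13_2

/-- A vector which is constant on the first block and minimal there is quasiconcave. -/
theorem quasi_of_min01 (v : Fin 4 → ℝ) (h01 : v 0 = v 1) (h2 : v 0 ≤ v 2)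
    (h3 : v 0 ≤ v 3) : QuasiconcaveH v := by
  have hmin : ∀ g : Fin 4, v 0 ≤ v g := by
    intro g
    fin_cases g
    · exact le_refl _
    · exact le_of_eq h01
    · exact h2
    · exact h3
  intro A hA g hg
  have hbdd : BddBelow (v '' A) := (A.toFinite.image v).bddBelow
  by_cases h0 : (0 : Fin 4) ∈ A
  · exact le_trans (csInf_le hbdd ⟨0, h0, rfl⟩) (hmin g)
  by_cases h1 : (1 : Fin 4) ∈ A
  · exact le_trans (csInf_le hbdd ⟨1, h1, rfl⟩) (h01 ▸ hmin g)
  exfalso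
  obtain ⟨hgam, hgA⟩ := hg
  by_cases h2A : (2 : Fin 4) ∈ A <;> by_cases h3A : (3 : Fin 4) ∈ A
  · -- A = {2,3}, common attribute m = 1
    have hm : ∀ g' ∈ A, hierI g' 1 := by
      intro g' hg'
      fin_cases g'
      · exact absurd hg' h0
      · exact absurd hg' h1
      · decide
      · decide
    have hdec : ∀ x : Fin 4, hierI x 1 → x = 2 ∨ x = 3 := by decide
    have : g = 2 ∨ g = 3 := hdec g (hierI_of_mem_gam hm hgam)
    rcases this with rfl | rfl
    · exact hgA h2A
    · exact hgA h3A
  · -- A = {2}, common attribute m = 4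
    have hm : ∀ g' ∈ A, hierI g' 4 := by
      intro g' hg'
      fin_cases g'
      · exact absurd hg' h0
      · exact absurd hg' h1
      · decide
      · exact absurd hg' h3A
    have hdec : ∀ x : Fin 4, hierI x 4 → x = 2 := by decide
    have : g = 2 := hdec g (hierI_of_mem_gam hm hgam)
    exact hgA (this ▸ h2A)
  · -- A = {3}, common attribute m = 5
    have hm : ∀ g' ∈ A, hierI g' 5 := by
      intro g' hg'
      fin_cases g'
      · exact absurd hg' h0
      · exact absurd hg' h1
      · exact absurd hg' h2A
      · decide
    have hdec : ∀ x : Fin 4, hierI x 5 → x = 3 := by decide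
    have : g = 3 := hdec g (hierI_of_mem_gam hm hgam)
    exact hgA (this ▸ h3A)
  · -- A empty
    obtain ⟨x, hx⟩ := hA
    fin_cases x
    · exact h0 hx
    · exact h1 hx
    · exact h2A hx
    · exact h3A hx

/-- A vector which is constant on the second block and minimal there is quasiconcave. -/
theorem quasi_of_min23 (v : Fin 4 → ℝ) (h23 : v 2 = v 3) (h0 : v 2 ≤ v 0)
    (h1 : v 2 ≤ v 1) : QuasiconcaveH v := by
  have hmin : ∀ g : Fin 4, v 2 ≤ v g := by
    intro g
    fin_cases g
    · exact h0
    · exact h1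
    · exact le_refl _
    · exact le_of_eq h23
  intro A hA g hg
  have hbdd : BddBelow (v '' A) := (A.toFinite.image v).bddBelow
  by_cases h2A : (2 : Fin 4) ∈ A
  · exact le_trans (csInf_le hbdd ⟨2, h2A, rfl⟩) (hmin g)
  by_cases h3A : (3 : Fin 4) ∈ A
  · exact le_trans (csInf_le hbdd ⟨3, h3A, rfl⟩) (h23 ▸ hmin g)
  exfalso
  obtain ⟨hgam, hgA⟩ := hg
  by_cases h0A : (0 : Fin 4) ∈ A <;> by_cases h1A : (1 : Fin 4) ∈ A
  · -- A = {0,1}, common attribute m = 0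
    have hm : ∀ g' ∈ A, hierI g' 0 := by
      intro g' hg'
      fin_cases g'
      · decide
      · decide
      · exact absurd hg' h2A
      · exact absurd hg' h3A
    have hdec : ∀ x : Fin 4, hierI x 0 → x = 0 ∨ x = 1 := by decide
    have : g = 0 ∨ g = 1 := hdec g (hierI_of_mem_gam hm hgam)
    rcases this with rfl | rfl
    · exact hgA h0A
    · exact hgA h1A
  · -- A = {0}, common attribute m = 2
    have hm : ∀ g' ∈ A, hierI g' 2 := by
      intro g' hg'
      fin_cases g'
      · decide
      · exact absurd hg' h1A
      · exact absurd hg' h2A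
      · exact absurd hg' h3A
    have hdec : ∀ x : Fin 4, hierI x 2 → x = 0 := by decide
    have : g = 0 := hdec g (hierI_of_mem_gam hm hgam)
    exact hgA (this ▸ h0A)
  · -- A = {1}, common attribute m = 3
    have hm : ∀ g' ∈ A, hierI g' 3 := by
      intro g' hg'
      fin_cases g'
      · exact absurd hg' h0A
      · decide
      · exact absurd hg' h2A
      · exact absurd hg' h3A
    have hdec : ∀ x : Fin 4, hierI x 3 → x = 1 := by decide
    have : g = 1 := hdec g (hierI_of_mem_gam hm hgam)
    exact hgA (this ▸ h1A)
  · obtain ⟨x, hx⟩ := hA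
    fin_cases x
    · exact h0A hx
    · exact h1A hx
    · exact h2A hx
    · exact h3A hx

/-- The perturbed uniform weight vector. -/
noncomputable def vfun (s t : ℝ) : Fin 4 → ℝ := ![1/4 - s, 1/4 + s, 1/4 - t, 1/4 + t]

theorem vfun_prob {s t : ℝ} (hs : |s| ≤ 1/8) (ht : |t| ≤ 1/8) :
    (∀ g, 0 ≤ vfun s t g) ∧ ∑ g, vfun s t g = 1 := by
  have hs' := abs_le.mp hs
  have ht' := abs_le.mp ht
  constructor
  · intro g
    fin_cases g <;> simp [vfun] <;> linarith
  · simp [vfun, Fin.sum_univ_four]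
    ring

/-- Step function used as monotone transform. -/
noncomputable def stepf (u v w : ℝ) : ℝ → ℝ := fun t =>
  if t < 1 then u else if t < 2 then v else w

theorem stepf_mono {u v w : ℝ} (huv : u ≤ v) (hvw : v ≤ w) : Monotone (stepf u v w) := by
  intro x y hxy
  unfold stepf
  split_ifs <;> linarith

open Classical in
/-- The strongly free parametrized depth function. -/
noncomputable def Dfun : ProbVec 4 → Fin 4 → ℝ := fun p =>
  if p.1 0 < p.1 1 then
    (if p.1 2 < p.1 3 then ![0, 0, 1, 2] else ![0, 0, 2, 1])
  else
    (if p.1 2 < p.1 3 then ![1, 2, 0, 0] else ![2, 1, 0, 0])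

theorem Dfun_tt {p : ProbVec 4} (h1 : p.1 0 < p.1 1) (h2 : p.1 2 < p.1 3) :
    Dfun p = ![0, 0, 1, 2] := by simp [Dfun, h1, h2]

theorem Dfun_tf {p : ProbVec 4} (h1 : p.1 0 < p.1 1) (h2 : ¬ p.1 2 < p.1 3) :
    Dfun p = ![0, 0, 2, 1] := by simp [Dfun, h1, h2]

theorem Dfun_ft {p : ProbVec 4} (h1 : ¬ p.1 0 < p.1 1) (h2 : p.1 2 < p.1 3) :
    Dfun p = ![1, 2, 0, 0] := by simp [Dfun, h1, h2]

theorem Dfun_ff {p : ProbVec 4} (h1 : ¬ p.1 0 < p.1 1) (h2 : ¬ p.1 2 < p.1 3) :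
    Dfun p = ![2, 1, 0, 0] := by simp [Dfun, h1, h2]

/-- There exists a parametrized depth function on the hierarchical nominal context
that is strongly free with respect to quasiconcavity. -/
theorem exists_strongly_free_depth :
    ∃ D : ProbVec 4 → Fin 4 → ℝ,
      (∀ p : ProbVec 4, QuasiconcaveH (D p)) ∧
      ∀ ε : ℝ, 0 < ε → ∃ Ps : Set (ProbVec 4),
        (∀ p ∈ Ps, ∀ q ∈ Ps, ∀ A : Set (Fin 4), |pMass p.1 A - pMass q.1 A| ≤ ε) ∧
        ∀ E : ProbVec 4 → Fin 4 → ℝ, (∀ p : ProbVec 4, QuasiconcaveH (E p)) →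
          ∀ p : ProbVec 4, ∃ p' ∈ Ps, ∃ f : ℝ → ℝ, Monotone f ∧ f ∘ D p' = E p := by
  classical
  refine ⟨Dfun, ?_, ?_⟩
  · intro p
    rw [Dfun]
    split_ifs
    · exact quasi_of_min01 _ (by norm_num) (by simp) (by simp)
    · exact quasi_of_min01 _ (by norm_num) (by simp) (by simp)
    · exact quasi_of_min23 _ (by simp) (by simp) (by simp)
    · exact quasi_of_min23 _ (by simp) (by simp) (by simp)
  · intro ε hε
    set δ : ℝ := min (ε / 8) (1 / 8) with hδdef
    have hδ0 : 0 < δ := lt_min (by linarith) (by norm_num)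
    have hδ8 : δ ≤ 1 / 8 := min_le_right _ _
    have hδε : 8 * δ ≤ ε := by
      have := min_le_left (ε / 8) (1 / 8)
      linarith
    have hd : |δ| ≤ 1 / 8 := by rw [abs_of_pos hδ0]; exact hδ8
    have hnd : |(-δ)| ≤ 1 / 8 := by rw [abs_neg, abs_of_pos hδ0]; exact hδ8
    let p1 : ProbVec 4 := ⟨vfun δ δ, vfun_prob hd hd⟩
    let p2 : ProbVec 4 := ⟨vfun δ (-δ), vfun_prob hd hnd⟩
    let p3 : ProbVec 4 := ⟨vfun (-δ) δ, vfun_prob hnd hd⟩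
    let p4 : ProbVec 4 := ⟨vfun (-δ) (-δ), vfun_prob hnd hnd⟩
    refine ⟨{p1, p2, p3, p4}, ?_, ?_⟩
    · -- diameter bound
      have hcoord : ∀ r ∈ ({p1, p2, p3, p4} : Set (ProbVec 4)), ∀ g, |r.1 g - 1/4| ≤ δ := by
        intro r hr g
        simp only [Set.mem_insert_iff, Set.mem_singleton_iff] at hr
        rcases hr with rfl | rfl | rfl | rfl <;> fin_cases g <;>
          simp [p1, p2, p3, p4, vfun] <;> rw [abs_le] <;> constructor <;> linarith
      intro p hp q hq A
      have hterm : ∀ g : Fin 4, |A.indicator p.1 g - A.indicator q.1 g| ≤ 2 * δ := by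
        intro g
        by_cases hgA : g ∈ A
        · rw [Set.indicator_of_mem hgA, Set.indicator_of_mem hgA]
          have h1 := hcoord p hp g
          have h2 := hcoord q hq g
          rw [abs_le] at h1 h2 ⊢
          constructor <;> [linarith [h1.1, h2.2]; linarith [h1.2, h2.1]]
        · rw [Set.indicator_of_notMem hgA, Set.indicator_of_notMem hgA]
          simp
          linarith
      have hsub : pMass p.1 A - pMass q.1 A
          = ∑ g : Fin 4, (A.indicator p.1 g - A.indicator q.1 g) := by
        rw [pMass, pMass, ← Finset.sum_sub_distrib]
      rw [hsub]
      calc |∑ g : Fin 4, (A.indicator p.1 g - A.indicator q.1 g)|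
          ≤ ∑ g : Fin 4, |A.indicator p.1 g - A.indicator q.1 g| :=
            Finset.abs_sum_le_sum_abs _ _
        _ ≤ ∑ _g : Fin 4, 2 * δ := Finset.sum_le_sum fun g _ => hterm g
        _ = 8 * δ := by simp [Finset.sum_const]; ring
        _ ≤ ε := hδε
    · -- reconstruction
      intro E hE p
      have hcδ : ∀ t : ℝ, vfun δ t 0 < vfun δ t 1 := by
        intro t; simp [vfun]; linarith
      have hcδ' : ∀ t : ℝ, ¬ vfun (-δ) t 0 < vfun (-δ) t 1 := by
        intro t; simp [vfun]; linarith
      have hcδ2 : ∀ s : ℝ, vfun s δ 2 < vfun s δ 3 := by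
        intro s; simp [vfun]; linarith
      have hcδ2' : ∀ s : ℝ, ¬ vfun s (-δ) 2 < vfun s (-δ) 3 := by
        intro s; simp [vfun]; linarith
      rcases quasi_shape (hE p) with ⟨h01, h02, h03⟩ | ⟨h23, h20, h21⟩
      · rcases le_total (E p 2) (E p 3) with h | h
        · refine ⟨p1, by simp, stepf (E p 0) (E p 2) (E p 3), stepf_mono h02 h, ?_⟩
          rw [Dfun_tt (hcδ δ) (hcδ2 δ)]
          funext g
          fin_cases g <;> norm_num [stepf] <;>
            first | rfl | exact h01 | exact h01.symm
        · refine ⟨p2, by simp, stepf (E p 0) (E p 3) (E p 2), stepf_mono h03 h, ?_⟩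
          rw [Dfun_tf (hcδ (-δ)) (hcδ2' δ)]
          funext g
          fin_cases g <;> norm_num [stepf] <;>
            first | rfl | exact h01 | exact h01.symm
      · rcases le_total (E p 0) (E p 1) with h | h
        · refine ⟨p3, by simp, stepf (E p 2) (E p 0) (E p 1), stepf_mono h20 h, ?_⟩
          rw [Dfun_ft (hcδ' δ) (hcδ2 (-δ))]
          funext g
          fin_cases g <;> norm_num [stepf] <;>
            first | rfl | exact h23 | exact h23.symm
        · refine ⟨p4, by simp, stepf (E p 2) (E p 1) (E p 0), stepf_mono h21 h, ?_⟩
          rw [Dfun_ff (hcδ' (-δ)) (hcδ2' (-δ))]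
          funext g
          fin_cases g <;> norm_num [stepf] <;>
            first | rfl | exact h23 | exact h23.symm
end

section
/- Consider the hierarchical nominal formal context with object type G = Fin 4 (objects o₀ = a₁a₂, o₁ = a₁b₂, o₂ = b₁a₂, o₃ = b₁b₂) and attribute type M = Fin 6 (attributes a₁, b₁, a₁a₂, a₁b₂, b₁a₂, b₁b₂), where the incidence relation is: o₀ has exactly {a₁, a₁a₂}, o₁ has exactly {a₁, a₁b₂}, o₂ has exactly {b₁, b₁a₂}, o₃ has exactly {b₁, b₁b₂}; let γ be the associated closure operator, Φ the attribute derivation operator, and for a probability vector p let T_p : G → ℝ be the generalised Tukey depth T_p g = 1 - sup { p(Φ {m}) | m : M, ¬ I g m }. Then the parametrized generalised Tukey depth p ↦ T_p is not strongly free with respect to quasiconcavity: there exists ε > 0 such that for every set 𝒫 of probability vectors on G with diameter at most ε, there exist a parametrized depth function E : ProbVec G → G → ℝ with E p quasiconcave for every p and a probability vector p such that for every p̃ ∈ 𝒫 and every monotone function f : ℝ → ℝ, f ∘ T_{p̃} ≠ E p. -/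
open MeasureTheory

variable {G M : Type*}

/-- The generalised Tukey depth on the hierarchical nominal context with respect to a
weight vector `p`. -/
noncomputable def hierTukey (p : Fin 4 → ℝ) (g : Fin 4) : ℝ :=
  1 - sSup {x : ℝ | ∃ m : Fin 6, ¬ hierI g m ∧ x = pMass p (Phi hierI {m})}

/- ## auxiliary lemmas -/

lemma massPhi0 (p : Fin 4 → ℝ) : pMass p (Phi hierI {0}) = p 0 + p 1 := by
  simp [pMass, Phi, hierI, Fin.sum_univ_four, Set.indicator_apply]
lemma massPhi1 (p : Fin 4 → ℝ) : pMass p (Phi hierI {1}) = p 2 + p 3 := by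
  simp [pMass, Phi, hierI, Fin.sum_univ_four, Set.indicator_apply]
lemma massPhi2 (p : Fin 4 → ℝ) : pMass p (Phi hierI {2}) = p 0 := by
  simp [pMass, Phi, hierI, Fin.sum_univ_four, Set.indicator_apply]
lemma massPhi3 (p : Fin 4 → ℝ) : pMass p (Phi hierI {3}) = p 1 := by
  simp [pMass, Phi, hierI, Fin.sum_univ_four, Set.indicator_apply]
lemma massPhi4 (p : Fin 4 → ℝ) : pMass p (Phi hierI {4}) = p 2 := by
  simp [pMass, Phi, hierI, Fin.sum_univ_four, Set.indicator_apply]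
lemma massPhi5 (p : Fin 4 → ℝ) : pMass p (Phi hierI {5}) = p 3 := by
  simp [pMass, Phi, hierI, Fin.sum_univ_four, Set.indicator_apply]

lemma massS1 (p : Fin 4 → ℝ) : pMass p {1} = p 1 := by
  simp [pMass, Fin.sum_univ_four, Set.indicator_apply]
lemma massS3 (p : Fin 4 → ℝ) : pMass p {3} = p 3 := by
  simp [pMass, Fin.sum_univ_four, Set.indicator_apply]
lemma massS01 (p : Fin 4 → ℝ) : pMass p {0, 1} = p 0 + p 1 := by
  simp [pMass, Fin.sum_univ_four, Set.indicator_apply]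
lemma massS23 (p : Fin 4 → ℝ) : pMass p {2, 3} = p 2 + p 3 := by
  simp [pMass, Fin.sum_univ_four, Set.indicator_apply]

lemma bddS (p : Fin 4 → ℝ) (g : Fin 4) :
    BddAbove {x : ℝ | ∃ m : Fin 6, ¬ hierI g m ∧ x = pMass p (Phi hierI {m})} := by
  apply BddAbove.mono (s := _) ?_ ((Set.finite_range fun m : Fin 6 => pMass p (Phi hierI {m})).bddAbove)
  rintro x ⟨m, _, rfl⟩
  exact ⟨m, rfl⟩

lemma T01 (p : Fin 4 → ℝ) (hp : ∀ g, 0 ≤ p g) (h : p 0 ≤ p 2 + p 3) :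
    hierTukey p 0 ≤ hierTukey p 1 := by
  unfold hierTukey
  have h1 : sSup {x : ℝ | ∃ m : Fin 6, ¬ hierI 1 m ∧ x = pMass p (Phi hierI {m})} ≤ p 2 + p 3 := by
    apply Real.sSup_le ?_ (by linarith [hp 2, hp 3])
    rintro x ⟨m, hm, rfl⟩
    fin_cases m
    · exact absurd (show hierI 1 0 by simp [hierI]) hm
    · exact le_of_eq (massPhi1 p)
    · exact (massPhi2 p).trans_le h
    · exact absurd (show hierI 1 3 by simp [hierI]) hm
    · exact (massPhi4 p).trans_le (by linarith [hp 3])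
    · exact (massPhi5 p).trans_le (by linarith [hp 2])
  have h0 : p 2 + p 3 ≤ sSup {x : ℝ | ∃ m : Fin 6, ¬ hierI 0 m ∧ x = pMass p (Phi hierI {m})} :=
    le_csSup (bddS p 0) ⟨1, by simp [hierI], (massPhi1 p).symm⟩
  linarith

lemma T10 (p : Fin 4 → ℝ) (hp : ∀ g, 0 ≤ p g) (h : p 1 ≤ p 2 + p 3) :
    hierTukey p 1 ≤ hierTukey p 0 := by
  unfold hierTukey
  have h1 : sSup {x : ℝ | ∃ m : Fin 6, ¬ hierI 0 m ∧ x = pMass p (Phi hierI {m})} ≤ p 2 + p 3 := by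
    apply Real.sSup_le ?_ (by linarith [hp 2, hp 3])
    rintro x ⟨m, hm, rfl⟩
    fin_cases m
    · exact absurd (show hierI 0 0 by simp [hierI]) hm
    · exact le_of_eq (massPhi1 p)
    · exact absurd (show hierI 0 2 by simp [hierI]) hm
    · exact (massPhi3 p).trans_le h
    · exact (massPhi4 p).trans_le (by linarith [hp 3])
    · exact (massPhi5 p).trans_le (by linarith [hp 2])
  have h0 : p 2 + p 3 ≤ sSup {x : ℝ | ∃ m : Fin 6, ¬ hierI 1 m ∧ x = pMass p (Phi hierI {m})} :=
    le_csSup (bddS p 1) ⟨1, by simp [hierI], (massPhi1 p).symm⟩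
  linarith

lemma T23 (p : Fin 4 → ℝ) (hp : ∀ g, 0 ≤ p g) (h : p 2 ≤ p 0 + p 1) :
    hierTukey p 2 ≤ hierTukey p 3 := by
  unfold hierTukey
  have h1 : sSup {x : ℝ | ∃ m : Fin 6, ¬ hierI 3 m ∧ x = pMass p (Phi hierI {m})} ≤ p 0 + p 1 := by
    apply Real.sSup_le ?_ (by linarith [hp 0, hp 1])
    rintro x ⟨m, hm, rfl⟩
    fin_cases m
    · exact le_of_eq (massPhi0 p)
    · exact absurd (show hierI 3 1 by simp [hierI]) hm
    · exact (massPhi2 p).trans_le (by linarith [hp 1])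
    · exact (massPhi3 p).trans_le (by linarith [hp 0])
    · exact (massPhi4 p).trans_le h
    · exact absurd (show hierI 3 5 by simp [hierI]) hm
  have h0 : p 0 + p 1 ≤ sSup {x : ℝ | ∃ m : Fin 6, ¬ hierI 2 m ∧ x = pMass p (Phi hierI {m})} :=
    le_csSup (bddS p 2) ⟨0, by simp [hierI], (massPhi0 p).symm⟩
  linarith

lemma T32 (p : Fin 4 → ℝ) (hp : ∀ g, 0 ≤ p g) (h : p 3 ≤ p 0 + p 1) :
    hierTukey p 3 ≤ hierTukey p 2 := by
  unfold hierTukey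
  have h1 : sSup {x : ℝ | ∃ m : Fin 6, ¬ hierI 2 m ∧ x = pMass p (Phi hierI {m})} ≤ p 0 + p 1 := by
    apply Real.sSup_le ?_ (by linarith [hp 0, hp 1])
    rintro x ⟨m, hm, rfl⟩
    fin_cases m
    · exact le_of_eq (massPhi0 p)
    · exact absurd (show hierI 2 1 by simp [hierI]) hm
    · exact (massPhi2 p).trans_le (by linarith [hp 1])
    · exact (massPhi3 p).trans_le (by linarith [hp 0])
    · exact absurd (show hierI 2 4 by simp [hierI]) hm
    · exact (massPhi5 p).trans_le h
  have h0 : p 0 + p 1 ≤ sSup {x : ℝ | ∃ m : Fin 6, ¬ hierI 3 m ∧ x = pMass p (Phi hierI {m})} :=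
    le_csSup (bddS p 3) ⟨0, by simp [hierI], (massPhi0 p).symm⟩
  linarith

/-- if `2 ∉ A` and `3 ∉ A`, the closure adds nothing. -/
lemma keyR (A : Set (Fin 4)) (hA : A.Nonempty) (g : Fin 4)
    (hg : g ∈ gam hierI A) (hg' : g ∉ A) : 2 ∈ A ∨ 3 ∈ A := by
  by_contra hc
  push_neg at hc
  obtain ⟨h2A, h3A⟩ := hc
  have hsub : ∀ a ∈ A, a = 0 ∨ a = 1 := by
    intro a ha
    have hne2 : a ≠ 2 := fun h => h2A (h ▸ ha)
    have hne3 : a ≠ 3 := fun h => h3A (h ▸ ha)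
    revert hne2 hne3; fin_cases a <;> simp
  have hg2 : ∀ m ∈ Psi hierI A, hierI g m := hg
  by_cases h0 : (0 : Fin 4) ∈ A <;> by_cases h1 : (1 : Fin 4) ∈ A
  · -- common attribute 0
    have hm : (0 : Fin 6) ∈ Psi hierI A := by
      intro a ha
      rcases hsub a ha with rfl | rfl <;> simp [hierI]
    have := hg2 0 hm
    have hgg : g = 0 ∨ g = 1 := by
      revert this; fin_cases g <;> simp [hierI]
    rcases hgg with rfl | rfl
    · exact hg' h0
    · exact hg' h1
  · -- A = {0}, attribute 2
    have hm : (2 : Fin 6) ∈ Psi hierI A := by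
      intro a ha
      rcases hsub a ha with rfl | rfl
      · simp [hierI]
      · exact absurd ha h1
    have := hg2 2 hm
    have hgg : g = 0 := by revert this; fin_cases g <;> simp [hierI]
    exact hg' (hgg ▸ h0)
  · -- A = {1}, attribute 3
    have hm : (3 : Fin 6) ∈ Psi hierI A := by
      intro a ha
      rcases hsub a ha with rfl | rfl
      · exact absurd ha h0
      · simp [hierI]
    have := hg2 3 hm
    have hgg : g = 1 := by revert this; fin_cases g <;> simp [hierI]
    exact hg' (hgg ▸ h1)
  · obtain ⟨a, ha⟩ := hA
    rcases hsub a ha with rfl | rfl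
    · exact h0 ha
    · exact h1 ha

lemma keyL (A : Set (Fin 4)) (hA : A.Nonempty) (g : Fin 4)
    (hg : g ∈ gam hierI A) (hg' : g ∉ A) : 0 ∈ A ∨ 1 ∈ A := by
  by_contra hc
  push_neg at hc
  obtain ⟨h0A, h1A⟩ := hc
  have hsub : ∀ a ∈ A, a = 2 ∨ a = 3 := by
    intro a ha
    have hne0 : a ≠ 0 := fun h => h0A (h ▸ ha)
    have hne1 : a ≠ 1 := fun h => h1A (h ▸ ha)
    revert hne0 hne1; fin_cases a <;> simp
  have hg2 : ∀ m ∈ Psi hierI A, hierI g m := hg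
  by_cases h2 : (2 : Fin 4) ∈ A <;> by_cases h3 : (3 : Fin 4) ∈ A
  · have hm : (1 : Fin 6) ∈ Psi hierI A := by
      intro a ha
      rcases hsub a ha with rfl | rfl <;> simp [hierI]
    have := hg2 1 hm
    have hgg : g = 2 ∨ g = 3 := by
      revert this; fin_cases g <;> simp [hierI]
    rcases hgg with rfl | rfl
    · exact hg' h2
    · exact hg' h3
  · have hm : (4 : Fin 6) ∈ Psi hierI A := by
      intro a ha
      rcases hsub a ha with rfl | rfl
      · simp [hierI]
      · exact absurd ha h3
    have := hg2 4 hm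
    have hgg : g = 2 := by revert this; fin_cases g <;> simp [hierI]
    exact hg' (hgg ▸ h2)
  · have hm : (5 : Fin 6) ∈ Psi hierI A := by
      intro a ha
      rcases hsub a ha with rfl | rfl
      · exact absurd ha h2
      · simp [hierI]
    have := hg2 5 hm
    have hgg : g = 3 := by revert this; fin_cases g <;> simp [hierI]
    exact hg' (hgg ▸ h3)
  · obtain ⟨a, ha⟩ := hA
    rcases hsub a ha with rfl | rfl
    · exact h2 ha
    · exact h3 ha

lemma quasi_of_zeros (D : Fin 4 → ℝ) (hpos : ∀ g, 0 ≤ D g)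
    (h : (D 2 = 0 ∧ D 3 = 0) ∨ (D 0 = 0 ∧ D 1 = 0)) : QuasiconcaveH D := by
  intro A hA g hg
  obtain ⟨hg1, hg2⟩ := hg
  have : ∃ a ∈ A, D a = 0 := by
    rcases h with ⟨h2, h3⟩ | ⟨h0, h1⟩
    · rcases keyR A hA g hg1 hg2 with ha | ha
      · exact ⟨2, ha, h2⟩
      · exact ⟨3, ha, h3⟩
    · rcases keyL A hA g hg1 hg2 with ha | ha
      · exact ⟨0, ha, h0⟩
      · exact ⟨1, ha, h1⟩
  obtain ⟨a, ha, hDa⟩ := this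
  have hbdd : BddBelow (D '' A) := ⟨0, by rintro x ⟨y, _, rfl⟩; exact hpos y⟩
  calc sInf (D '' A) ≤ D a := csInf_le hbdd ⟨a, ha, rfl⟩
    _ = 0 := hDa
    _ ≤ D g := hpos g

/-- the uniform probability vector -/
noncomputable def unifP : ProbVec 4 :=
  ⟨fun _ => (1 : ℝ) / 4, fun _ => by norm_num, by norm_num [Fin.sum_univ_four]⟩

/-- The parametrized generalised Tukey depth on the hierarchical nominal context is not
strongly free with respect to quasiconcavity. -/
theorem hierTukey_not_strongly_free :
    ∃ ε : ℝ, 0 < ε ∧ ∀ Ps : Set (ProbVec 4),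
      (∀ p ∈ Ps, ∀ q ∈ Ps, ∀ A : Set (Fin 4), |pMass p.1 A - pMass q.1 A| ≤ ε) →
      ∃ E : ProbVec 4 → Fin 4 → ℝ, (∀ p : ProbVec 4, QuasiconcaveH (E p)) ∧
        ∃ p : ProbVec 4, ∀ p' ∈ Ps, ∀ f : ℝ → ℝ, Monotone f → f ∘ hierTukey p'.1 ≠ E p := by
  refine ⟨1/8, by norm_num, fun Ps hdiam => ?_⟩
  by_cases hC0 : ∀ p' ∈ Ps, p'.1 0 ≤ p'.1 2 + p'.1 3
  · refine ⟨fun _ => (fun g => if g = 0 then 2 else if g = 1 then 1 else 0), ?_, unifP, ?_⟩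
    · intro _
      apply quasi_of_zeros
      · intro g; fin_cases g <;> simp <;> norm_num
      · left; constructor <;> simp
    · intro p' hp' f hf heq
      have h0 := congrFun heq 0
      have h1 := congrFun heq 1
      simp only [Function.comp_apply] at h0 h1
      simp only [Fin.isValue, if_true, if_neg (by decide : ¬((1:Fin 4) = 0))] at h0 h1
      have hT := T01 p'.1 p'.2.1 (hC0 p' hp')
      have := hf hT
      rw [h0, h1] at this
      norm_num at this
  by_cases hC1 : ∀ p' ∈ Ps, p'.1 1 ≤ p'.1 2 + p'.1 3
  · refine ⟨fun _ => (fun g => if g = 0 then 1 else if g = 1 then 2 else 0), ?_, unifP, ?_⟩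
    · intro _
      apply quasi_of_zeros
      · intro g; fin_cases g <;> simp <;> norm_num
      · left; constructor <;> simp
    · intro p' hp' f hf heq
      have h0 := congrFun heq 0
      have h1 := congrFun heq 1
      simp only [Function.comp_apply] at h0 h1
      simp only [Fin.isValue, if_true, if_neg (by decide : ¬((1:Fin 4) = 0))] at h0 h1
      have hT := T10 p'.1 p'.2.1 (hC1 p' hp')
      have := hf hT
      rw [h0, h1] at this
      norm_num at this
  by_cases hC2 : ∀ p' ∈ Ps, p'.1 2 ≤ p'.1 0 + p'.1 1
  · refine ⟨fun _ => (fun g => if g = 2 then 2 else if g = 3 then 1 else 0), ?_, unifP, ?_⟩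
    · intro _
      apply quasi_of_zeros
      · intro g; fin_cases g <;> simp <;> norm_num
      · right; constructor <;> simp
    · intro p' hp' f hf heq
      have h2 := congrFun heq 2
      have h3 := congrFun heq 3
      simp only [Function.comp_apply] at h2 h3
      norm_num at h2 h3
      have hT := T23 p'.1 p'.2.1 (hC2 p' hp')
      have := hf hT
      rw [h2, h3, if_neg (show ¬((3:Fin 4) = 2) by decide)] at this
      norm_num at this
  have hC3 : ∀ p' ∈ Ps, p'.1 3 ≤ p'.1 0 + p'.1 1 := by
    by_contra hC3
    push_neg at hC0 hC1 hC2 hC3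
    obtain ⟨pa, hpa, ha⟩ := hC0
    obtain ⟨pb, hpb, hb⟩ := hC1
    obtain ⟨pc, hpc, hc⟩ := hC2
    obtain ⟨pd, hpd, hd⟩ := hC3
    have hab := hdiam pa hpa pb hpb {1}
    have hab' := hdiam pa hpa pb hpb {2, 3}
    have hcd := hdiam pc hpc pd hpd {3}
    have hcd' := hdiam pc hpc pd hpd {0, 1}
    have hac := hdiam pa hpa pc hpc {2, 3}
    rw [massS1, massS1] at hab
    rw [massS23, massS23] at hab'
    rw [massS3, massS3] at hcd
    rw [massS01, massS01] at hcd'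
    rw [massS23, massS23] at hac
    have hsa : pa.1 0 + pa.1 1 + pa.1 2 + pa.1 3 = 1 := by
      have := pa.2.2; rwa [Fin.sum_univ_four] at this
    have hsc : pc.1 0 + pc.1 1 + pc.1 2 + pc.1 3 = 1 := by
      have := pc.2.2; rwa [Fin.sum_univ_four] at this
    rw [abs_le] at hab hab' hcd hcd' hac
    linarith
  refine ⟨fun _ => (fun g => if g = 2 then 1 else if g = 3 then 2 else 0), ?_, unifP, ?_⟩
  · intro _
    apply quasi_of_zeros
    · intro g; fin_cases g <;> simp <;> norm_num
    · right; constructor <;> simp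
  · intro p' hp' f hf heq
    have h2 := congrFun heq 2
    have h3 := congrFun heq 3
    simp only [Function.comp_apply] at h2 h3
    norm_num at h2 h3
    have hT := T32 p'.1 p'.2.1 (hC3 p' hp')
    have := hf hT
    rw [h2, h3, if_neg (show ¬((3:Fin 4) = 2) by decide)] at this
    norm_num at this
end
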